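/- arXiv:0812.1388 — 3 statements merged into one kernel-verified Lean document; each statement's English description precedes it below -/
import Mathlib

section
/- With the mixture models M_{(K,S)} as defined, for any K₁, K₂ ∈ {1,...,K_max} and any nonempty subsets S₁, S₂ of loci, one has M_{(K₁,S₁)} ∩ M_{(K₂,S₂)} = M_{(min(K₁,K₂), S₁ ∩ S₂)} (interpreting S₁ ∩ S₂ possibly empty by the convention that all loci outside the clustering set have cluster-independent frequencies). -/
open Finset

/-- Hardy–Weinberg genotype probability at a single locus: for an unordered pair
`{a, b}` of alleles with allele-frequency vector `γ`, the probability is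
`(2 - 1[a = b]) * γ a * γ b`. -/
noncomputable def hwProb {A : ℕ} (γ : Fin A → ℝ) : Sym2 (Fin A) → ℝ :=
  Sym2.lift ⟨fun a b => (if a = b then 1 else 2) * (γ a * γ b), by
    intro a b
    rcases eq_or_ne a b with h | h
    · simp [h]
    · simp only [if_neg h, if_neg h.symm]
      ring⟩

/-- A full multilocus genotype: an unordered pair of alleles at each of the `L` loci. -/
def Genotype (L : ℕ) (A : Fin L → ℕ) : Type := ∀ l : Fin L, Sym2 (Fin (A l))

/-- The mixture probability `P_{(K,S)}(x | θ)` with parameters `θ = (π, α, β)`. -/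
noncomputable def mixtureProb {L : ℕ} (A : Fin L → ℕ) (K : ℕ) (S : Finset (Fin L))
    (π : Fin K → ℝ) (α : Fin K → ∀ l : Fin L, Fin (A l) → ℝ)
    (β : ∀ l : Fin L, Fin (A l) → ℝ) (x : Genotype L A) : ℝ :=
  (∑ k, π k * ∏ l ∈ S, hwProb (α k l) (x l)) * ∏ l ∈ Sᶜ, hwProb (β l) (x l)

/-- The model `M_{(K,S)}`: all distributions of the form `P_{(K,S)}(· | θ)` as
`θ = (π, α, β)` ranges over the admissible parameters. -/
noncomputable def Model {L : ℕ} (A : Fin L → ℕ) (K : ℕ) (S : Finset (Fin L)) :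
    Set (Genotype L A → ℝ) :=
  { P | ∃ (π : Fin K → ℝ) (α : Fin K → ∀ l : Fin L, Fin (A l) → ℝ)
      (β : ∀ l : Fin L, Fin (A l) → ℝ),
      (∀ k, 0 < π k) ∧ (∑ k, π k = 1) ∧
      (∀ k l, (∀ j, 0 ≤ α k l j) ∧ ∑ j, α k l j = 1) ∧
      (∀ l, (∀ j, 0 ≤ β l j) ∧ ∑ j, β l j = 1) ∧
      (∀ x, P x = mixtureProb A K S π α β x) }

/-!
The models are monotone in both parameters: a component can be split into several copies sharing
its weight, and a locus joins the clustering set when every component is given the frequencies `β`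
there. This gives `⊇`.

For `⊆`, each single-locus factor sums to one over genotypes, so the marginal of
`P_{(K,S)}(· | θ)` on a set `T` of loci is `(∑ₖ πₖ ∏_{T ∩ S} P(xˡ | αₖₗ)) ∏_{T \ S} P(xˡ | βₗ)`.
If `P` lies in `M_{(K₁,S₁)}` and `M_{(K₂,S₂)}`, comparing the marginals of the two representations
on `S₁` and on `S₁ ∩ S₂` shows that the `S₁`-mixture of the first one factors as its
`S₁ ∩ S₂`-mixture times cluster-independent factors on `S₁ \ S₂`. Hence `P ∈ M_{(K₁, S₁ ∩ S₂)}`,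
and symmetrically `P ∈ M_{(K₂, S₁ ∩ S₂)}`.
-/

open Function

theorem hwProb_eq_sum_fiber {A : ℕ} (γ : Fin A → ℝ) (z : Sym2 (Fin A)) :
    hwProb γ z = ∑ p : Fin A × Fin A with s(p.1, p.2) = z, γ p.1 * γ p.2 := by
  induction z using Sym2.ind with
  | _ a b =>
    have hfiber : ({p : Fin A × Fin A | s(p.1, p.2) = s(a, b)} : Finset _) = {(a, b), (b, a)} := by
      ext p
      simp [Prod.ext_iff]
    rw [hfiber]
    rcases eq_or_ne a b with rfl | hab
    · simp [hwProb]
    · rw [sum_pair (by simp [Prod.ext_iff, hab])]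
      simp only [hwProb, Sym2.lift_mk, if_neg hab]
      ring

theorem sum_hwProb_eq_sq {A : ℕ} (γ : Fin A → ℝ) :
    ∑ z : Sym2 (Fin A), hwProb γ z = (∑ a, γ a) ^ 2 := by
  simp_rw [hwProb_eq_sum_fiber, sum_fiberwise, sq, sum_mul_sum, ← Fintype.sum_prod_type']

theorem sum_hwProb_eq_one {A : ℕ} {γ : Fin A → ℝ} (h : ∑ a, γ a = 1) :
    ∑ z : Sym2 (Fin A), hwProb γ z = 1 := by
  rw [sum_hwProb_eq_sq, h, one_pow]

theorem prod_hwProb_piecewise {L : ℕ} {A : Fin L → ℕ} (T S : Finset (Fin L))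
    (a b : ∀ l, Fin (A l) → ℝ) (x : Genotype L A) :
    ∏ l ∈ T, hwProb (S.piecewise a b l) (x l) =
      (∏ l ∈ T ∩ S, hwProb (a l) (x l)) * ∏ l ∈ T \ S, hwProb (b l) (x l) := by
  rw [← prod_piecewise]
  refine prod_congr rfl fun l _ => ?_
  by_cases hl : l ∈ S <;> simp [hl]

theorem sum_piFinset_prod_of_sum_eq_one {ι R : Type*} {κ : ι → Type*} [Fintype ι]
    [DecidableEq ι] [∀ i, Fintype (κ i)] [CommSemiring R] (T : Finset ι) (x : ∀ i, κ i)
    (g : ∀ i, κ i → R) (hg : ∀ i ∉ T, ∑ z, g i z = 1) :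
    ∑ y ∈ Fintype.piFinset (fun i => if i ∈ T then {x i} else univ), ∏ i, g i (y i) =
      ∏ i ∈ T, g i (x i) := by
  rw [← prod_univ_sum, ← univ_inter T, ← prod_ite_mem]
  refine prod_congr rfl fun i _ => ?_
  by_cases hi : i ∈ T <;> simp [hi, hg]

theorem sum_div_card_fiber {ι κ M : Type*} [Fintype ι] [Fintype κ] [DecidableEq κ] [Semifield M]
    [CharZero M] {σ : ι → κ} (hσ : Surjective σ) (f : κ → M) :
    ∑ i, f (σ i) / #{j | σ j = σ i} = ∑ k, f k := by
  rw [← sum_fiberwise univ σ]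
  refine sum_congr rfl fun k _ => ?_
  obtain ⟨i₀, rfl⟩ := hσ k
  rw [sum_congr rfl fun i hi => by rw [(mem_filter.1 hi).2], sum_const, nsmul_eq_mul,
    mul_div_cancel₀]
  exact Nat.cast_ne_zero.2 (card_ne_zero.2 ⟨i₀, by simp⟩)

section Model

variable {L : ℕ} {A : Fin L → ℕ}

def marginal (T : Finset (Fin L)) (P : Genotype L A → ℝ) (x : Genotype L A) : ℝ :=
  ∑ y ∈ Fintype.piFinset (fun l => if l ∈ T then {x l} else univ), P y

/- `x` is a plain dependent function, like the summation variable in `marginal`, so that this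
rewrites under that sum: `simp` and `rw` do not unfold `Genotype`. -/
theorem mixtureProb_eq_sum_prod (K : ℕ) (S : Finset (Fin L)) (π : Fin K → ℝ)
    (α : Fin K → ∀ l, Fin (A l) → ℝ) (β : ∀ l, Fin (A l) → ℝ) (x : ∀ l, Sym2 (Fin (A l))) :
    mixtureProb A K S π α β x = ∑ k, π k * ∏ l, hwProb (S.piecewise (α k) β l) (x l) := by
  unfold mixtureProb
  rw [sum_mul]
  refine sum_congr rfl fun k _ => ?_
  rw [prod_hwProb_piecewise univ S (α k) β x, univ_inter, ← compl_eq_univ_sdiff, mul_assoc]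

theorem marginal_mixtureProb {K : ℕ} {S : Finset (Fin L)} (π : Fin K → ℝ)
    {α : Fin K → ∀ l, Fin (A l) → ℝ} {β : ∀ l, Fin (A l) → ℝ}
    (hα : ∀ k l, ∑ j, α k l j = 1) (hβ : ∀ l, ∑ j, β l j = 1) (T : Finset (Fin L))
    (x : Genotype L A) :
    marginal T (mixtureProb A K S π α β) x =
      (∑ k, π k * ∏ l ∈ T ∩ S, hwProb (α k l) (x l)) * ∏ l ∈ T \ S, hwProb (β l) (x l) := by
  have hsum : ∀ k l, ∑ z, hwProb (S.piecewise (α k) β l) z = 1 := fun k l =>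
    sum_hwProb_eq_one (S.piecewise_cases (α k) β (fun γ => ∑ j, γ j = 1) (hα k l) (hβ l))
  unfold marginal
  simp_rw [mixtureProb_eq_sum_prod]
  rw [sum_comm, sum_mul]
  refine sum_congr rfl fun k _ => ?_
  rw [← mul_sum, sum_piFinset_prod_of_sum_eq_one T x _ fun l _ => hsum k l,
    prod_hwProb_piecewise T S (α k) β x, mul_assoc]

theorem marginal_mixtureProb_of_subset {K : ℕ} {S T : Finset (Fin L)} (π : Fin K → ℝ)
    {α : Fin K → ∀ l, Fin (A l) → ℝ} {β : ∀ l, Fin (A l) → ℝ}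
    (hα : ∀ k l, ∑ j, α k l j = 1) (hβ : ∀ l, ∑ j, β l j = 1) (hT : T ⊆ S)
    (x : Genotype L A) :
    marginal T (mixtureProb A K S π α β) x = ∑ k, π k * ∏ l ∈ T, hwProb (α k l) (x l) := by
  rw [marginal_mixtureProb π hα hβ, inter_eq_left.2 hT, sdiff_eq_empty_iff_subset.2 hT,
    prod_empty, mul_one]

/- Component `k` is replaced by the fibre `σ⁻¹ {k}`, whose members share its weight equally. -/
theorem model_mono_of_surjective {K K' : ℕ} {S : Finset (Fin L)} {σ : Fin K' → Fin K}
    (hσ : Surjective σ) : Model A K S ⊆ Model A K' S := by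
  rintro P ⟨π, α, β, hπ, hπ₁, hα, hβ, hP⟩
  refine ⟨fun i => π (σ i) / #{j | σ j = σ i}, fun i => α (σ i), β,
    fun i => div_pos (hπ _) (Nat.cast_pos.2 (card_pos.2 ⟨i, by simp⟩)),
    (sum_div_card_fiber hσ π).trans hπ₁, fun i => hα (σ i), hβ, fun x => ?_⟩
  rw [hP]
  unfold mixtureProb
  rw [← sum_div_card_fiber hσ]
  simp_rw [div_mul_eq_mul_div]

theorem model_mono_clusters {K K' : ℕ} {S : Finset (Fin L)} (h : K ≤ K') :
    Model A K S ⊆ Model A K' S := by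
  intro P hP
  have : Nonempty (Fin K) := by
    obtain ⟨π, -, -, -, hπ₁, -⟩ := hP
    by_contra hK
    simp [not_nonempty_iff.1 hK] at hπ₁
  exact model_mono_of_surjective (invFun_surjective (Fin.castLE_injective h)) hP

theorem model_mono_loci {K : ℕ} {S S' : Finset (Fin L)} (h : S ⊆ S') :
    Model A K S ⊆ Model A K S' := by
  rintro P ⟨π, α, β, hπ, hπ₁, hα, hβ, hP⟩
  refine ⟨π, fun k => S.piecewise (α k) β, β, hπ, hπ₁,
    fun k l => S.piecewise_cases (α k) β (fun γ => (∀ j, 0 ≤ γ j) ∧ ∑ j, γ j = 1) (hα k l) (hβ l),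
    hβ, fun x => ?_⟩
  rw [hP]
  unfold mixtureProb
  rw [← prod_sdiff (compl_subset_compl.2 h), compl_sdiff_compl, ← mul_assoc, sum_mul]
  congr 1
  refine sum_congr rfl fun k _ => ?_
  rw [prod_hwProb_piecewise S' S (α k) β x, inter_eq_right.2 h, mul_assoc]

theorem model_mono {K K' : ℕ} {S S' : Finset (Fin L)} (hK : K ≤ K') (hS : S ⊆ S') :
    Model A K S ⊆ Model A K' S' :=
  (model_mono_clusters hK).trans (model_mono_loci hS)

theorem mem_model_inter_of_mem_of_mem {K₁ K₂ : ℕ} {S₁ S₂ : Finset (Fin L)}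
    {P : Genotype L A → ℝ} (h₁ : P ∈ Model A K₁ S₁) (h₂ : P ∈ Model A K₂ S₂) :
    P ∈ Model A K₁ (S₁ ∩ S₂) := by
  obtain ⟨π₁, α₁, β₁, hπ₁, hπ₁s, hα₁, hβ₁, hP₁⟩ := h₁
  obtain ⟨π₂, α₂, β₂, -, -, hα₂, hβ₂, hP₂⟩ := h₂
  have hmix : mixtureProb A K₁ S₁ π₁ α₁ β₁ = mixtureProb A K₂ S₂ π₂ α₂ β₂ :=
    funext fun y => (hP₁ y).symm.trans (hP₂ y)
  have hα₁' k l := (hα₁ k l).2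
  have hβ₁' l := (hβ₁ l).2
  have hα₂' k l := (hα₂ k l).2
  have hβ₂' l := (hβ₂ l).2
  refine ⟨π₁, α₁, S₁.piecewise β₂ β₁, hπ₁, hπ₁s, hα₁,
    fun l => S₁.piecewise_cases β₂ β₁ (fun γ => (∀ j, 0 ≤ γ j) ∧ ∑ j, γ j = 1) (hβ₂ l) (hβ₁ l),
    fun x => ?_⟩
  have hmarg_S₁ : ∑ k, π₁ k * ∏ l ∈ S₁, hwProb (α₁ k l) (x l) =
      (∑ k, π₂ k * ∏ l ∈ S₁ ∩ S₂, hwProb (α₂ k l) (x l)) * ∏ l ∈ S₁ \ S₂, hwProb (β₂ l) (x l) := by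
    rw [← marginal_mixtureProb_of_subset π₁ hα₁' hβ₁' subset_rfl, hmix,
      marginal_mixtureProb π₂ hα₂' hβ₂']
  have hmarg_S₁₂ : ∑ k, π₁ k * ∏ l ∈ S₁ ∩ S₂, hwProb (α₁ k l) (x l) =
      ∑ k, π₂ k * ∏ l ∈ S₁ ∩ S₂, hwProb (α₂ k l) (x l) := by
    rw [← marginal_mixtureProb_of_subset π₁ hα₁' hβ₁' inter_subset_left, hmix,
      marginal_mixtureProb_of_subset π₂ hα₂' hβ₂' inter_subset_right]
  have hin : (S₁ ∩ S₂)ᶜ ∩ S₁ = S₁ \ S₂ := by ext; simp only [mem_inter, mem_compl, mem_sdiff]; tauto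
  have hout : (S₁ ∩ S₂)ᶜ \ S₁ = S₁ᶜ := by ext; simp only [mem_inter, mem_compl, mem_sdiff]; tauto
  rw [hP₁ x, mixtureProb, mixtureProb, hmarg_S₁, ← hmarg_S₁₂,
    prod_hwProb_piecewise _ S₁ β₂ β₁ x, hin, hout, mul_assoc]

end Model

theorem model_inter_general {L : ℕ} (A : Fin L → ℕ) (K₁ K₂ : ℕ) (S₁ S₂ : Finset (Fin L)) :
    Model A K₁ S₁ ∩ Model A K₂ S₂ = Model A (min K₁ K₂) (S₁ ∩ S₂) := by
  refine Set.Subset.antisymm (fun P ⟨h₁, h₂⟩ => ?_) fun P hP =>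
    ⟨model_mono (min_le_left _ _) inter_subset_left hP,
      model_mono (min_le_right _ _) inter_subset_right hP⟩
  rcases le_total K₁ K₂ with h | h
  · rw [min_eq_left h]
    exact mem_model_inter_of_mem_of_mem h₁ h₂
  · rw [min_eq_right h, inter_comm]
    exact mem_model_inter_of_mem_of_mem h₂ h₁

/-- for `K₁, K₂ ∈ {1, …, K_max}` and nonempty loci subsets `S₁, S₂`,
`M_{(K₁,S₁)} ∩ M_{(K₂,S₂)} = M_{(K₁ ∧ K₂, S₁ ∩ S₂)}`. -/
theorem model_inter {L : ℕ} (A : Fin L → ℕ) (Kmax : ℕ) (K₁ K₂ : ℕ) (S₁ S₂ : Finset (Fin L))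
    (hK₁ : 1 ≤ K₁) (hK₁' : K₁ ≤ Kmax) (hK₂ : 1 ≤ K₂) (hK₂' : K₂ ≤ Kmax)
    (hS₁ : S₁.Nonempty) (hS₂ : S₂.Nonempty) :
    Model A K₁ S₁ ∩ Model A K₂ S₂ = Model A (min K₁ K₂) (S₁ ∩ S₂) :=
  model_inter_general A K₁ K₂ S₁ S₂
end

section
/- (Proposition 2) Let X be a finite set, P₀ a distribution on X with P₀(u) > 0 for all u, and {Q_θ : θ ∈ Θ} a family of distributions on X such that Θ^δ̃ = {θ : Q_θ(u) ≥ δ̃ ∀u} is nonempty for some δ̃ ∈ (0,1). Set p = min_u P₀(u) and choose δ with 0 < δ < δ̃^{1/p} and δ ≤ p. Then for i.i.d. data from P₀, sup_{θ∈Θ} (1/n)ℓ_n(Q_θ) = sup_{θ∈Θ^δ} (1/n)ℓ_n(Q_θ) + o_{P₀}(1), where Θ^δ = {θ : Q_θ(u) ≥ δ ∀u} and ℓ_n(Q) = Σ_u n_u ln Q(u). -/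
/-!
Write the average log-likelihood as `∑ u, r u * log (Q θ u)`, where `r` are the empirical
frequencies. If `Q θ u₁ < δ`, this is at most `r u₁ * log δ`; since `r u₁ → P₀ u₁ ≥ p` almost
surely and `p * log δ < log δ̃`, eventually this is below `log δ̃`, which in turn is at most the
value at any `θ ∈ Θ^δ̃ ⊆ Θ^δ`. So almost surely both suprema coincide for all large `n`, and
almost sure convergence implies convergence in probability.
-/

open Finset Filter MeasureTheory ProbabilityTheory Topology Real

theorem ciSup_eq_ciSup_subtype_of_le {ι α : Type*} [ConditionallyCompleteLattice α]
    {f : ι → α} (hf : BddAbove (Set.range f)) {P : ι → Prop} {i₀ : ι} (hi₀ : P i₀)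
    (h : ∀ i, ¬P i → f i ≤ f i₀) :
    ⨆ i, f i = ⨆ i : Subtype P, f i := by
  have : Nonempty ι := ⟨i₀⟩
  have : Nonempty (Subtype P) := ⟨⟨i₀, hi₀⟩⟩
  have hfP : BddAbove (Set.range fun i : Subtype P => f i) :=
    hf.mono (Set.range_comp_subset_range _ f)
  refine le_antisymm (ciSup_le fun i => ?_) (ciSup_le fun i => le_ciSup hf i)
  by_cases hi : P i
  · exact le_ciSup hfP ⟨i, hi⟩
  · exact (h i hi).trans (le_ciSup hfP ⟨i₀, hi₀⟩)

section LogLikelihood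

variable {X : Type*} [Fintype X] {r q : X → ℝ}

theorem sum_mul_log_nonpos (hr : ∀ u, 0 ≤ r u) (hq0 : ∀ u, 0 ≤ q u) (hq1 : ∀ u, q u ≤ 1) :
    ∑ u, r u * log (q u) ≤ 0 :=
  sum_nonpos fun u _ => mul_nonpos_of_nonneg_of_nonpos (hr u) (log_nonpos (hq0 u) (hq1 u))

theorem sum_mul_log_le_mul_log_of_lt (hr : ∀ u, 0 ≤ r u) (hq0 : ∀ u, 0 < q u)
    (hq1 : ∀ u, q u ≤ 1) {δ : ℝ} {u₁ : X} (hu₁ : q u₁ < δ) :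
    ∑ u, r u * log (q u) ≤ r u₁ * log δ := by
  classical
  have hrest : ∑ u ∈ univ.erase u₁, r u * log (q u) ≤ 0 :=
    sum_nonpos fun u _ => mul_nonpos_of_nonneg_of_nonpos (hr u) (log_nonpos (hq0 u).le (hq1 u))
  have hlog_u₁ : r u₁ * log (q u₁) ≤ r u₁ * log δ :=
    mul_le_mul_of_nonneg_left (log_le_log (hq0 u₁) hu₁.le) (hr u₁)
  rw [← add_sum_erase _ _ (mem_univ u₁)]
  linarith

theorem log_le_sum_mul_log (hr0 : ∀ u, 0 ≤ r u) (hr1 : ∑ u, r u = 1) {a : ℝ} (ha : 0 < a)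
    (hq : ∀ u, a ≤ q u) :
    log a ≤ ∑ u, r u * log (q u) :=
  calc log a = ∑ u, r u * log a := by rw [← sum_mul, hr1, one_mul]
    _ ≤ ∑ u, r u * log (q u) :=
      sum_le_sum fun u _ => mul_le_mul_of_nonneg_left (log_le_log ha (hq u)) (hr0 u)

theorem iSup_sum_mul_log_eq_iSup_subtype {Θ : Type*} (Q : Θ → X → ℝ)
    (hQpos : ∀ θ u, 0 < Q θ u) (hQle : ∀ θ u, Q θ u ≤ 1)
    (hr0 : ∀ u, 0 ≤ r u) (hr1 : ∑ u, r u = 1) {δ δt : ℝ} (hδt : 0 < δt) (hδδt : δ ≤ δt)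
    {θt : Θ} (hθt : ∀ u, δt ≤ Q θt u) (hr : ∀ u, r u * log δ ≤ log δt) :
    ⨆ θ, ∑ u, r u * log (Q θ u) = ⨆ θ : {θ // ∀ u, δ ≤ Q θ u}, ∑ u, r u * log (Q θ u) := by
  refine ciSup_eq_ciSup_subtype_of_le ⟨0, ?_⟩ (fun u => hδδt.trans (hθt u)) fun θ hθ => ?_
  · rintro _ ⟨θ, rfl⟩
    exact sum_mul_log_nonpos hr0 (fun u => (hQpos θ u).le) (hQle θ)
  · obtain ⟨u₁, hu₁⟩ := not_forall.1 hθ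
    calc ∑ u, r u * log (Q θ u) ≤ r u₁ * log δ :=
          sum_mul_log_le_mul_log_of_lt hr0 (hQpos θ) (hQle θ) (not_le.1 hu₁)
      _ ≤ log δt := hr u₁
      _ ≤ ∑ u, r u * log (Q θt u) := log_le_sum_mul_log hr0 hr1 hδt hθt

end LogLikelihood

section Empirical

variable {X : Type*}

noncomputable def empiricalFreq [DecidableEq X] (xs : ℕ → X) (n : ℕ) (u : X) : ℝ :=
  (n : ℝ)⁻¹ * #{i ∈ range n | xs i = u}

variable [DecidableEq X] (xs : ℕ → X) (n : ℕ)

theorem empiricalFreq_nonneg (u : X) : 0 ≤ empiricalFreq xs n u := by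
  unfold empiricalFreq; positivity

theorem sum_empiricalFreq_mul [Fintype X] (g : X → ℝ) :
    ∑ u, empiricalFreq xs n u * g u = (1 / (n : ℝ)) * ∑ i ∈ range n, g (xs i) := by
  simp only [empiricalFreq, ← sum_fiberwise' (range n) xs g, mul_sum, sum_const, nsmul_eq_mul,
    mul_assoc, one_div]

theorem sum_empiricalFreq [Fintype X] (hn : n ≠ 0) : ∑ u, empiricalFreq xs n u = 1 := by
  simpa [hn] using sum_empiricalFreq_mul xs n 1

end Empirical

section StrongLaw

variable {Ω X : Type*} [MeasurableSpace Ω] {μ : Measure Ω} [MeasurableSpace X]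
  [MeasurableSingletonClass X]

theorem identDistrib_of_measure_preimage_singleton [Countable X] {ν : Measure Ω} {f g : Ω → X}
    (hf : Measurable f) (hg : Measurable g) (h : ∀ u, μ (f ⁻¹' {u}) = ν (g ⁻¹' {u})) :
    IdentDistrib f g μ ν :=
  ⟨hf.aemeasurable, hg.aemeasurable, Measure.ext_of_singleton fun u => by
    rw [Measure.map_apply hf (measurableSet_singleton u),
      Measure.map_apply hg (measurableSet_singleton u), h]⟩

theorem tendsto_empiricalFreq_ae [DecidableEq X] [IsProbabilityMeasure μ] {Xs : ℕ → Ω → X}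
    (hmeas : ∀ i, Measurable (Xs i)) (hindep : Pairwise fun i j => IndepFun (Xs i) (Xs j) μ)
    (hident : ∀ i, IdentDistrib (Xs i) (Xs 0) μ μ) (u : X) :
    ∀ᵐ ω ∂μ, Tendsto (fun n => empiricalFreq (fun i => Xs i ω) n u) atTop
      (𝓝 (μ.real (Xs 0 ⁻¹' {u}))) := by
  set g : X → ℝ := ({u} : Set X).indicator 1
  have hg : Measurable g := measurable_one.indicator (measurableSet_singleton u)
  have hint : Integrable (g ∘ Xs 0) μ :=
    .of_bound (hg.comp (hmeas 0)).aestronglyMeasurable 1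
      (ae_of_all _ fun ω => by
        simp only [g, Function.comp_apply, Set.indicator_apply]; split_ifs <;> simp)
  have hmean : μ[g ∘ Xs 0] = μ.real (Xs 0 ⁻¹' {u}) := by
    rw [← integral_indicator_one ((hmeas 0) (measurableSet_singleton u))]
    rfl
  have hslln := strong_law_ae (fun i => g ∘ Xs i) hint (fun i j hij => (hindep hij).comp hg hg)
    fun i => (hident i).comp hg
  rw [hmean] at hslln
  filter_upwards [hslln] with ω hω
  convert hω using 2 with n
  simp only [empiricalFreq, g, Function.comp_apply, Set.indicator_apply, Set.mem_singleton_iff,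
    Pi.one_apply, sum_boole, smul_eq_mul]

theorem ae_forall_tendsto_empiricalFreq [Countable X] [DecidableEq X] [IsProbabilityMeasure μ]
    {Xs : ℕ → Ω → X} (hmeas : ∀ i, Measurable (Xs i)) (hindep : iIndepFun Xs μ) {P : X → ℝ}
    (hP : ∀ u, 0 ≤ P u) (hdist : ∀ i u, μ {ω | Xs i ω = u} = ENNReal.ofReal (P u)) :
    ∀ᵐ ω ∂μ, ∀ u, Tendsto (fun n => empiricalFreq (fun i => Xs i ω) n u) atTop (𝓝 (P u)) := by
  refine ae_all_iff.2 fun u => ?_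
  have hident (i : ℕ) : IdentDistrib (Xs i) (Xs 0) μ μ :=
    identDistrib_of_measure_preimage_singleton (hmeas i) (hmeas 0) fun u =>
      (hdist i u).trans (hdist 0 u).symm
  have hmean : μ.real (Xs 0 ⁻¹' {u}) = P u :=
    (congrArg ENNReal.toReal (hdist 0 u)).trans (ENNReal.toReal_ofReal (hP u))
  exact hmean ▸ tendsto_empiricalFreq_ae hmeas (fun i j hij => hindep.indepFun hij) hident u

end StrongLaw

theorem measurable_iSup_mul_sum_range {Ω X Θ : Type*} [MeasurableSpace Ω] [Finite X]
    [MeasurableSpace X] [MeasurableSingletonClass X] {Xs : ℕ → Ω → X}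
    (hmeas : ∀ i, Measurable (Xs i)) (g : Θ → X → ℝ) (n : ℕ) :
    Measurable fun ω => ⨆ θ, (1 / (n : ℝ)) * ∑ i ∈ range n, g θ (Xs i ω) := by
  simp_rw [← Fin.sum_univ_eq_sum_range (fun i => g _ (Xs i _)) n]
  exact (measurable_of_countable fun v : Fin n → X => ⨆ θ, (1 / (n : ℝ)) * ∑ i, g θ (v i)).comp
    (measurable_pi_lambda _ fun i => hmeas i)

theorem eventually_iSup_mul_sum_range_log_eq_iSup_subtype {X Θ : Type*} [Fintype X]
    [DecidableEq X] (Q : Θ → X → ℝ) (hQpos : ∀ θ u, 0 < Q θ u) (hQle : ∀ θ u, Q θ u ≤ 1)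
    {δ δt : ℝ} (hδt : 0 < δt) (hδδt : δ ≤ δt) {θt : Θ} (hθt : ∀ u, δt ≤ Q θt u)
    {P : X → ℝ} (hP : ∀ u, P u * log δ < log δt) {xs : ℕ → X}
    (hlim : ∀ u, Tendsto (fun n => empiricalFreq xs n u) atTop (𝓝 (P u))) :
    ∀ᶠ n : ℕ in atTop, ⨆ θ, (1 / (n : ℝ)) * ∑ i ∈ range n, log (Q θ (xs i))
      = ⨆ θ : {θ // ∀ u, δ ≤ Q θ u}, (1 / (n : ℝ)) * ∑ i ∈ range n, log (Q θ (xs i)) := by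
  have hfreq : ∀ᶠ n in atTop, ∀ u, empiricalFreq xs n u * log δ ≤ log δt :=
    eventually_all.2 fun u => ((hlim u).mul_const (log δ)).eventually (eventually_le_nhds (hP u))
  filter_upwards [hfreq, eventually_ne_atTop 0] with n hn hn0
  have havg (θ : Θ) := (sum_empiricalFreq_mul xs n fun u => log (Q θ u)).symm
  simp only [havg]
  exact iSup_sum_mul_log_eq_iSup_subtype Q hQpos hQle (empiricalFreq_nonneg xs n)
    (sum_empiricalFreq xs n hn0) hδt hδδt hθt hn

theorem mul_log_lt_log_of_lt_rpow {p δ a : ℝ} (hp : 0 < p) (hδ : 0 < δ) (ha : 0 < a)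
    (h : δ < a ^ (1 / p)) : p * log δ < log a := by
  have h' := log_lt_log hδ h
  rw [log_rpow ha] at h'
  calc p * log δ < p * (1 / p * log a) := by gcongr
    _ = log a := by field_simp

theorem lt_and_forall_mul_log_lt_log_of_lt_rpow_iInf {X : Type*} [Finite X] [Nonempty X]
    {P : X → ℝ} (hpos : ∀ u, 0 < P u) (hle : ∀ u, P u ≤ 1) {δ a : ℝ} (hδ : 0 < δ)
    (ha0 : 0 < a) (ha1 : a ≤ 1) (h : δ < a ^ (1 / ⨅ u, P u)) :
    δ < a ∧ ∀ u, P u * log δ < log a := by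
  obtain ⟨u₀, hu₀⟩ := exists_eq_ciInf_of_finite (f := P)
  have hu₀_le (u : X) : P u₀ ≤ P u := hu₀ ▸ ciInf_le (Finite.bddBelow_range P) u
  rw [← hu₀] at h
  have hδa : δ < a :=
    h.trans_le (rpow_le_self_of_le_one ha0.le ha1 (one_le_one_div (hpos u₀) (hle u₀)))
  refine ⟨hδa, fun u => ?_⟩
  calc P u * log δ ≤ P u₀ * log δ :=
        mul_le_mul_of_nonpos_right (hu₀_le u) (log_nonpos hδ.le (hδa.trans_le ha1).le)
    _ < log a := mul_log_lt_log_of_lt_rpow (hpos u₀) hδ ha0 h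

theorem sup_loglik_restriction_general {X : Type*} [Fintype X] [Nonempty X]
    [MeasurableSpace X] [MeasurableSingletonClass X]
    {Ω : Type*} [MeasurableSpace Ω] (μ : Measure Ω) [IsProbabilityMeasure μ]
    (Xs : ℕ → Ω → X) (hmeas : ∀ i, Measurable (Xs i))
    (hindep : iIndepFun Xs μ)
    (P₀ : X → ℝ) (hpos : ∀ u, 0 < P₀ u) (hsum : ∑ u, P₀ u = 1)
    (hdist : ∀ i u, μ {ω | Xs i ω = u} = ENNReal.ofReal (P₀ u))
    {Θ : Type*} (Q : Θ → X → ℝ)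
    (hQpos : ∀ θ u, 0 < Q θ u) (hQsum : ∀ θ, ∑ u, Q θ u = 1)
    (δt : ℝ) (hδt0 : 0 < δt) (hδt1 : δt < 1)
    (hΘδt : ∃ θ, ∀ u, δt ≤ Q θ u)
    (δ : ℝ) (hδ0 : 0 < δ) (hδδt : δ < δt ^ (1 / (⨅ u, P₀ u))) :
    ∀ ε > (0 : ℝ), Tendsto
      (fun (n : ℕ) => μ {ω | ε ≤
        |(⨆ θ : Θ, (1 / (n : ℝ)) * ∑ i ∈ Finset.range n, Real.log (Q θ (Xs i ω)))
          - ⨆ θ : {θ : Θ // ∀ u, δ ≤ Q θ u},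
              (1 / (n : ℝ)) * ∑ i ∈ Finset.range n, Real.log (Q θ (Xs i ω))|})
      atTop (nhds 0) := by
  classical
  obtain ⟨θt, hθt⟩ := hΘδt
  have hP₀le (u : X) : P₀ u ≤ 1 := hsum ▸ single_le_sum (fun v _ => (hpos v).le) (mem_univ u)
  obtain ⟨hδ_lt_δt, hlog⟩ :=
    lt_and_forall_mul_log_lt_log_of_lt_rpow_iInf hpos hP₀le hδ0 hδt0 hδt1.le hδδt
  have hQle (θ : Θ) (u : X) : Q θ u ≤ 1 :=
    hQsum θ ▸ single_le_sum (fun v _ => (hQpos θ v).le) (mem_univ u)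
  have hfreq := ae_forall_tendsto_empiricalFreq hmeas hindep (fun u => (hpos u).le) hdist
  have hmeas_diff (n : ℕ) : Measurable fun ω =>
      (⨆ θ : Θ, (1 / (n : ℝ)) * ∑ i ∈ Finset.range n, Real.log (Q θ (Xs i ω)))
        - ⨆ θ : {θ : Θ // ∀ u, δ ≤ Q θ u},
            (1 / (n : ℝ)) * ∑ i ∈ Finset.range n, Real.log (Q θ (Xs i ω)) :=
    (measurable_iSup_mul_sum_range hmeas (fun θ u => log (Q θ u)) n).sub
      (measurable_iSup_mul_sum_range hmeas (fun (θ : {θ // ∀ u, δ ≤ Q θ u}) u => log (Q θ u)) n)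
  have hconv := tendstoInMeasure_of_tendsto_ae (g := 0) (fun n => (hmeas_diff n).aestronglyMeasurable)
    (hfreq.mono fun ω hω => tendsto_const_nhds.congr' <|
      (eventually_iSup_mul_sum_range_log_eq_iSup_subtype Q hQpos hQle hδt0 hδ_lt_δt.le hθt hlog
        hω).mono fun n hn => (sub_eq_zero.2 hn).symm)
  simpa using tendstoInMeasure_iff_norm.1 hconv

/-- Proposition 2: restriction of the likelihood maximization to
`Θ^δ = {θ : Q_θ(u) ≥ δ ∀u}`: with `p = min_u P₀(u)`, `Θ^δ̃` nonempty for some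
`δ̃ ∈ (0,1)`, and `0 < δ < δ̃^(1/p)`, `δ ≤ p`, one has
`sup_{θ∈Θ} (1/n)ℓ_n(Q_θ) = sup_{θ∈Θ^δ} (1/n)ℓ_n(Q_θ) + o_{P₀}(1)`. -/
theorem sup_loglik_restriction {X : Type*} [Fintype X] [Nonempty X]
    [MeasurableSpace X] [MeasurableSingletonClass X]
    {Ω : Type*} [MeasurableSpace Ω] (μ : Measure Ω) [IsProbabilityMeasure μ]
    (Xs : ℕ → Ω → X) (hmeas : ∀ i, Measurable (Xs i))
    (hindep : iIndepFun Xs μ)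
    (P₀ : X → ℝ) (hpos : ∀ u, 0 < P₀ u) (hsum : ∑ u, P₀ u = 1)
    (hdist : ∀ i u, μ {ω | Xs i ω = u} = ENNReal.ofReal (P₀ u))
    {Θ : Type*} [Nonempty Θ] (Q : Θ → X → ℝ)
    (hQpos : ∀ θ u, 0 < Q θ u) (hQsum : ∀ θ, ∑ u, Q θ u = 1)
    (δt : ℝ) (hδt0 : 0 < δt) (hδt1 : δt < 1)
    (hΘδt : ∃ θ, ∀ u, δt ≤ Q θ u)
    (δ : ℝ) (hδ0 : 0 < δ) (hδδt : δ < δt ^ (1 / (⨅ u, P₀ u)))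
    (hδp : δ ≤ ⨅ u, P₀ u) :
    ∀ ε > (0 : ℝ), Tendsto
      (fun (n : ℕ) => μ {ω | ε ≤
        |(⨆ θ : Θ, (1 / (n : ℝ)) * ∑ i ∈ Finset.range n, Real.log (Q θ (Xs i ω)))
          - ⨆ θ : {θ : Θ // ∀ u, δ ≤ Q θ u},
              (1 / (n : ℝ)) * ∑ i ∈ Finset.range n, Real.log (Q θ (Xs i ω))|})
      atTop (nhds 0) :=
  sup_loglik_restriction_general μ Xs hmeas hindep P₀ hpos hsum hdist Q hQpos hQsum δt hδt0 hδt1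
    hΘδt δ hδ0 hδδt
end

section
/- (Theorem: consistency of BIC model selection on a finite model collection) Let X be a finite set and let {M_m : m ∈ M} be a finite collection of models, each M_m a set of distributions on X parameterized continuously by a compact-exhaustible parameter set, with dimensions d_m satisfying: if m ≠ m₀ and P₀ ∈ M_m then d_m > d_{m₀}. Assume P₀ ∈ M_{m₀}, P₀(u) > 0 for all u ∈ X, and each model contains some distribution bounded below by a positive constant. Define BIC_n(m) = 2 sup_{Q∈M_m} ℓ_n(Q) − d_m ln n and m̂_n = argmax_m BIC_n(m). Then P₀(m̂_n = m₀) → 1 as n → ∞. -/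
/-!
In terms of the counts `Nᵤ`, the log-likelihood is `ℓ_n(Q) = ∑ᵤ Nᵤ log Q(u)`, and `m̂_n ≠ m₀`
requires some `m ≠ m₀` with `BIC_n(m) ≥ BIC_n(m₀)`. For large `n` this forces some count to
deviate from `n P₀(u)` by more than `√(n r_n)` with `r_n → ∞`, which Chebyshev's inequality makes
improbable.

If `P₀ ∈ M_m`, then `d_m ≥ d_{m₀} + 1`, while `log x ≤ x - 1` bounds `sup_{M_m} ℓ_n - ℓ_n(P₀)` by
Pearson's statistic `∑ᵤ (Nᵤ - n P₀(u))² / (n P₀(u))`; so that statistic is at least `(log n) / 2`.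

If `P₀ ∉ M_m`, the members of `M_m` bounded below by `δ` form a compact set, on which the divergence
from `P₀` is at least some `ε > 0`. When all counts are within `n t` of their means, these members
lose about `n ε` in log-likelihood against `P₀`, and the members with a coordinate below `δ` lose at
least `n`; a linear loss outweighs the `O(log n)` difference of the penalties.
-/

open Finset Filter MeasureTheory ProbabilityTheory

namespace ModelSelection

open Real Topology

section

variable {Ω : Type*} [MeasurableSpace Ω] {μ : Measure Ω} [IsProbabilityMeasure μ]

lemma tendsto_measure_argmax_eq {M : Type*} [Fintype M] (score : M → ℕ → Ω → ℝ)
    (mhat : ℕ → Ω → M) (hmhat : ∀ n ω m, score m n ω ≤ score (mhat n ω) n ω) (m₀ : M)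
    (h : ∀ m ≠ m₀, Tendsto (fun n => μ {ω | score m₀ n ω ≤ score m n ω}) atTop (𝓝 0)) :
    Tendsto (fun n => μ {ω | mhat n ω = m₀}) atTop (𝓝 1) := by
  classical
  set b := fun n => ∑ m ∈ univ.erase m₀, μ {ω | score m₀ n ω ≤ score m n ω}
  have hb : Tendsto b atTop (𝓝 0) := by
    simpa using tendsto_finsetSum _ fun m hm => h m (ne_of_mem_erase hm)
  have hcompl : ∀ n, μ {ω | mhat n ω = m₀}ᶜ ≤ b n := fun n => by
    refine (measure_mono fun ω hω => ?_).trans (measure_biUnion_finset_le _ _)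
    exact Set.mem_biUnion (mem_erase.mpr ⟨hω, mem_univ _⟩) (hmhat n ω m₀)
  have hlow : ∀ n, 1 - b n ≤ μ {ω | mhat n ω = m₀} := fun n => by
    have hunion := measure_union_le (μ := μ) {ω | mhat n ω = m₀} {ω | mhat n ω = m₀}ᶜ
    rw [Set.union_compl_self, measure_univ] at hunion
    exact tsub_le_iff_right.mpr (hunion.trans (add_le_add le_rfl (hcompl n)))
  have hb' : Tendsto (fun n => 1 - b n) atTop (𝓝 1) := by
    simpa using ENNReal.Tendsto.sub tendsto_const_nhds hb (Or.inl ENNReal.one_ne_top)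
  exact tendsto_of_tendsto_of_tendsto_of_le_of_le hb' tendsto_const_nhds hlow fun n => prob_le_one

lemma variance_sum_le_of_mem_Icc {Y : ℕ → Ω → ℝ} (hY : ∀ i, Measurable (Y i))
    (h01 : ∀ i ω, Y i ω ∈ Set.Icc (0 : ℝ) 1) (hindep : ∀ i j, i ≠ j → IndepFun (Y i) (Y j) μ)
    (n : ℕ) : variance (∑ i ∈ range n, Y i) μ ≤ n / 4 := by
  rw [IndepFun.variance_sum
    (fun i _ => memLp_of_bounded (ae_of_all _ (h01 i)) (hY i).aestronglyMeasurable 2)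
    fun i _ j _ hij => hindep i j hij]
  calc ∑ i ∈ range n, variance (Y i) μ ≤ ∑ _i ∈ range n, ((1 - 0) / 2 : ℝ) ^ 2 :=
        sum_le_sum fun i _ =>
          variance_le_sq_of_bounded (ae_of_all _ (h01 i)) (hY i).aemeasurable
    _ = n / 4 := by simp; ring

end

variable {X : Type*}

lemma isCompact_image_sep_forall_le {Θ : Type*} [TopologicalSpace Θ] {T : Set Θ}
    {φ : Θ → X → ℝ} (hφ : ∀ u, ContinuousOn (fun θ => φ θ u) T) {δ : ℝ}
    (hT : IsCompact {θ ∈ T | ∀ u, δ ≤ φ θ u}) : IsCompact {Q ∈ φ '' T | ∀ u, δ ≤ Q u} := by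
  have himage : {Q ∈ φ '' T | ∀ u, δ ≤ Q u} = φ '' {θ ∈ T | ∀ u, δ ≤ φ θ u} := by
    ext Q
    constructor
    · rintro ⟨⟨θ, hθ, rfl⟩, hδ⟩
      exact ⟨θ, ⟨hθ, hδ⟩, rfl⟩
    · rintro ⟨θ, ⟨hθ, hδ⟩, rfl⟩
      exact ⟨⟨θ, hθ, rfl⟩, hδ⟩
  rw [himage]
  exact hT.image_of_continuousOn ((continuousOn_pi.2 hφ).mono fun θ hθ => hθ.1)

section Counts

variable [DecidableEq X]

def count (x : ℕ → X) (n : ℕ) (u : X) : ℝ :=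
  ∑ i ∈ range n, if x i = u then 1 else 0

lemma count_nonneg (x : ℕ → X) (n : ℕ) (u : X) : 0 ≤ count x n u :=
  sum_nonneg fun i _ => by split_ifs <;> norm_num

variable [MeasurableSpace X] [MeasurableSingletonClass X]
  {Ω : Type*} [MeasurableSpace Ω] {μ : Measure Ω} [IsProbabilityMeasure μ] {Xs : ℕ → Ω → X}

lemma measure_le_abs_count_sub_le (hmeas : ∀ i, Measurable (Xs i)) (hindep : iIndepFun Xs μ)
    {u : X} {p : ℝ} (hp : 0 ≤ p) (hdist : ∀ i, μ {ω | Xs i ω = u} = ENNReal.ofReal p)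
    (n : ℕ) {c : ℝ} (hc : 0 < c) :
    μ {ω | c ≤ |count (Xs · ω) n u - n * p|} ≤ ENNReal.ofReal (n / (4 * c ^ 2)) := by
  set g : X → ℝ := fun x => if x = u then 1 else 0
  have hg : Measurable g := Measurable.ite measurableSet_eq measurable_const measurable_const
  set Y : ℕ → Ω → ℝ := fun i => g ∘ Xs i
  have hY01 : ∀ i ω, Y i ω ∈ Set.Icc (0 : ℝ) 1 := fun i ω => by
    simp only [Y, g, Function.comp_apply]
    split_ifs <;> simp
  have hY : ∀ i, MemLp (Y i) 2 μ := fun i =>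
    memLp_of_bounded (ae_of_all _ (hY01 i)) (hg.comp (hmeas i)).aestronglyMeasurable 2
  have hcount : (fun ω => count (Xs · ω) n u) = ∑ i ∈ range n, Y i := by
    ext ω
    simp [count, Y, g, Finset.sum_apply]
  have hmean : μ[∑ i ∈ range n, Y i] = n * p := by
    simp only [Finset.sum_apply]
    rw [integral_finsetSum _ fun i _ => (hY i).integrable one_le_two]
    have hYI : ∀ i, μ[Y i] = p := fun i => by
      have : Y i = Set.indicator {ω | Xs i ω = u} 1 := by
        ext ω
        simp [Y, g, Set.indicator_apply]
      have hmeasSet : MeasurableSet {ω | Xs i ω = u} := hmeas i measurableSet_eq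
      rw [this, integral_indicator_one hmeasSet, measureReal_def, hdist i,
        ENNReal.toReal_ofReal hp]
    simp [hYI]
  have hvar := variance_sum_le_of_mem_Icc (fun i => hg.comp (hmeas i)) hY01
    (fun i j hij => (hindep.indepFun hij).comp hg hg) n
  have hL2 : MemLp (fun ω => count (Xs · ω) n u) 2 μ :=
    hcount ▸ memLp_finsetSum' (range n) fun i _ => hY i
  rw [← hcount] at hmean hvar
  have hcheb := meas_ge_le_variance_div_sq hL2 hc
  rw [hmean] at hcheb
  refine hcheb.trans (ENNReal.ofReal_le_ofReal ?_)
  calc variance (fun ω => count (Xs · ω) n u) μ / c ^ 2 ≤ n / 4 / c ^ 2 := by gcongr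
    _ = n / (4 * c ^ 2) := by ring

end Counts

-- `sSup` is junk unless the set is nonempty and bounded above, as it is for nonempty
-- `S ⊆ openSimplex X`, where log-likelihoods are `≤ 0`.
noncomputable def maxLogLik (S : Set (X → ℝ)) (x : ℕ → X) (n : ℕ) : ℝ :=
  sSup {y : ℝ | ∃ Q ∈ S, y = ∑ i ∈ range n, log (Q (x i))}

noncomputable def bic (S : Set (X → ℝ)) (d : ℕ) (x : ℕ → X) (n : ℕ) : ℝ :=
  2 * maxLogLik S x n - d * log n

variable [Fintype X]

variable (X) in
def openSimplex : Set (X → ℝ) :=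
  {Q | (∀ u, 0 < Q u) ∧ ∑ u, Q u = 1}

lemma le_one_of_mem_openSimplex {Q : X → ℝ} (hQ : Q ∈ openSimplex X) (u : X) : Q u ≤ 1 :=
  hQ.2 ▸ single_le_sum (fun v _ => (hQ.1 v).le) (mem_univ u)

lemma log_nonpos_of_mem_openSimplex {Q : X → ℝ} (hQ : Q ∈ openSimplex X) (u : X) :
    log (Q u) ≤ 0 :=
  log_nonpos (hQ.1 u).le (le_one_of_mem_openSimplex hQ u)

lemma mul_log_sub_log_le {a b c : ℝ} (ha : 0 ≤ a) (hb : 0 < b) (hc : 0 < c) :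
    a * (log b - log c) ≤ a * (b / c - 1) := by
  rw [← log_div hb.ne' hc.ne']
  exact mul_le_mul_of_nonneg_left (log_le_sub_one_of_pos (div_pos hb hc)) ha

noncomputable def relEntropy (P Q : X → ℝ) : ℝ :=
  ∑ u, P u * (log (P u) - log (Q u))

lemma relEntropy_pos {P Q : X → ℝ} (hP : P ∈ openSimplex X) (hQ : Q ∈ openSimplex X)
    (hne : Q ≠ P) : 0 < relEntropy P Q := by
  obtain ⟨u₀, hu₀⟩ := Function.ne_iff.mp hne
  have hterm : ∀ u, P u * (log (Q u) - log (P u)) ≤ Q u - P u := fun u => by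
    have := mul_log_sub_log_le (hP.1 u).le (hQ.1 u) (hP.1 u)
    rwa [mul_sub_one, mul_div_cancel₀ _ (hP.1 u).ne'] at this
  have hstrict : P u₀ * (log (Q u₀) - log (P u₀)) < Q u₀ - P u₀ := by
    have hratio : Q u₀ / P u₀ ≠ 1 := fun h => hu₀ ((div_eq_one_iff_eq (hP.1 u₀).ne').mp h)
    have := mul_lt_mul_of_pos_left
      (log_lt_sub_one_of_pos (div_pos (hQ.1 u₀) (hP.1 u₀)) hratio) (hP.1 u₀)
    rwa [log_div (hQ.1 u₀).ne' (hP.1 u₀).ne', mul_sub_one,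
      mul_div_cancel₀ _ (hP.1 u₀).ne'] at this
  have hsum := sum_lt_sum (fun u _ => hterm u) ⟨u₀, mem_univ _, hstrict⟩
  rw [sum_sub_distrib, hQ.2, hP.2, sub_self] at hsum
  have hneg : relEntropy P Q = -∑ u, P u * (log (Q u) - log (P u)) := by
    rw [relEntropy, ← sum_neg_distrib]
    exact sum_congr rfl fun u _ => by ring
  linarith

lemma mul_log_sub_log_le_sq_div {ν n q p : ℝ} (hν : 0 ≤ ν) (hn : 0 < n) (hq : 0 < q)
    (hp : 0 < p) :
    ν * (log q - log p) ≤ (ν - n * p) ^ 2 / (n * p) + n * q - n * p := by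
  rcases hν.eq_or_lt with rfl | hν
  · have : (0 - n * p) ^ 2 / (n * p) = n * p := by field_simp; ring
    rw [this]
    nlinarith [mul_pos hn hq]
  · have h₁ := mul_log_sub_log_le hν.le hq (div_pos hν hn)
    have h₂ := mul_log_sub_log_le hν.le (div_pos hν hn) hp
    calc ν * (log q - log p)
        = ν * (log q - log (ν / n)) + ν * (log (ν / n) - log p) := by ring
      _ ≤ ν * (q / (ν / n) - 1) + ν * (ν / n / p - 1) := add_le_add h₁ h₂
      _ = (ν - n * p) ^ 2 / (n * p) + n * q - n * p := by field_simp; ring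

lemma sum_mul_log_le_add_chiSq {ν Q P : X → ℝ} {n : ℝ} (hν : ∀ u, 0 ≤ ν u) (hn : 0 < n)
    (hQ : Q ∈ openSimplex X) (hP : P ∈ openSimplex X) :
    ∑ u, ν u * log (Q u) ≤ ∑ u, ν u * log (P u) + ∑ u, (ν u - n * P u) ^ 2 / (n * P u) := by
  have hratio : ∑ u, ν u * (log (Q u) - log (P u)) ≤ ∑ u, (ν u - n * P u) ^ 2 / (n * P u) :=
    calc ∑ u, ν u * (log (Q u) - log (P u))
        ≤ ∑ u, ((ν u - n * P u) ^ 2 / (n * P u) + n * Q u - n * P u) :=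
          sum_le_sum fun u _ => mul_log_sub_log_le_sq_div (hν u) hn (hQ.1 u) (hP.1 u)
      _ = ∑ u, (ν u - n * P u) ^ 2 / (n * P u) := by
          rw [sum_sub_distrib, sum_add_distrib, ← mul_sum, ← mul_sum, hQ.2, hP.2]
          ring
  simp only [mul_sub, sum_sub_distrib] at hratio
  linarith

lemma sum_mul_log_eq_add_sub_relEntropy (ν Q P : X → ℝ) (n : ℝ) :
    ∑ u, ν u * log (Q u) = ∑ u, ν u * log (P u)
      + ∑ u, (ν u - n * P u) * (log (Q u) - log (P u)) - n * relEntropy P Q := by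
  rw [relEntropy, mul_sum, ← sum_add_distrib, ← sum_sub_distrib]
  exact sum_congr rfl fun u _ => by ring

lemma sum_mul_log_le_of_abs_le {ν Q P : X → ℝ} {n t B : ℝ}
    (hν : ∀ u, |ν u - n * P u| ≤ n * t) (hB : ∀ u, |log (Q u) - log (P u)| ≤ B) :
    ∑ u, ν u * log (Q u)
      ≤ ∑ u, ν u * log (P u) + Fintype.card X * (n * t * B) - n * relEntropy P Q := by
  have hcross : ∑ u, (ν u - n * P u) * (log (Q u) - log (P u)) ≤ Fintype.card X * (n * t * B) := by
    rw [← nsmul_eq_mul, ← card_univ, ← sum_const]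
    refine sum_le_sum fun u _ => ?_
    calc (ν u - n * P u) * (log (Q u) - log (P u))
        ≤ |ν u - n * P u| * |log (Q u) - log (P u)| := by rw [← abs_mul]; exact le_abs_self _
      _ ≤ n * t * B := mul_le_mul (hν u) (hB u) (abs_nonneg _) ((abs_nonneg _).trans (hν u))
  linarith [sum_mul_log_eq_add_sub_relEntropy ν Q P n]

lemma sum_mul_log_le_mul_log_of_le {a Q : X → ℝ} (ha : ∀ u, 0 ≤ a u) (hQ : Q ∈ openSimplex X)
    {u₀ : X} {c δ : ℝ} (hc : c ≤ a u₀) (hQδ : Q u₀ ≤ δ) (hδ : δ ≤ 1) :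
    ∑ u, a u * log (Q u) ≤ c * log δ := by
  classical
  have hlogδ : log δ ≤ 0 := log_nonpos ((hQ.1 u₀).le.trans hQδ) hδ
  calc ∑ u, a u * log (Q u)
      = a u₀ * log (Q u₀) + ∑ u ∈ univ.erase u₀, a u * log (Q u) :=
        (add_sum_erase _ _ (mem_univ u₀)).symm
    _ ≤ a u₀ * log (Q u₀) := add_le_of_nonpos_right (sum_nonpos fun u _ =>
        mul_nonpos_of_nonneg_of_nonpos (ha u) (log_nonpos_of_mem_openSimplex hQ u))
    _ ≤ a u₀ * log δ := mul_le_mul_of_nonneg_left (log_le_log (hQ.1 u₀) hQδ) (ha u₀)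
    _ ≤ c * log δ := mul_le_mul_of_nonpos_right hc hlogδ

lemma abs_log_sub_log_le {a b q p : ℝ} (ha : 0 < a) (haq : a ≤ q) (hq : q ≤ 1) (hb : 0 < b)
    (hbp : b ≤ p) (hp : p ≤ 1) : |log q - log p| ≤ -log a - log b := by
  rw [abs_le]
  constructor <;> linarith [log_le_log ha haq, log_nonpos (ha.le.trans haq) hq,
    log_le_log hb hbp, log_nonpos (hb.le.trans hbp) hp]

lemma mul_log_le_sum_mul_log {ν P : X → ℝ} {n c : ℝ} (hν : ∀ u, 0 ≤ ν u) (hνn : ∑ u, ν u = n)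
    (hc : 0 < c) (hcP : ∀ u, c ≤ P u) : n * log c ≤ ∑ u, ν u * log (P u) := by
  rw [← hνn, sum_mul]
  exact sum_le_sum fun u _ => mul_le_mul_of_nonneg_left (log_le_log hc (hcP u)) (hν u)

lemma exists_pos_le_of_mem_openSimplex {P : X → ℝ} (hP : P ∈ openSimplex X) :
    ∃ c ∈ Set.Ioc 0 1, ∀ u, c ≤ P u := by
  cases isEmpty_or_nonempty X
  · exact ⟨1, ⟨one_pos, le_rfl⟩, fun u => isEmptyElim u⟩
  · obtain ⟨u₀, hu₀⟩ := Finite.exists_min P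
    exact ⟨P u₀, ⟨hP.1 u₀, le_one_of_mem_openSimplex hP u₀⟩, hu₀⟩

lemma exists_pos_le_relEntropy {S : Set (X → ℝ)} {P : X → ℝ} (hS : S ⊆ openSimplex X)
    (hP : P ∈ openSimplex X) (hPS : P ∉ S) {δ : ℝ} (hδ : 0 < δ)
    (hK : IsCompact {Q ∈ S | ∀ u, δ ≤ Q u}) :
    ∃ ε > 0, ∀ Q ∈ S, (∀ u, δ ≤ Q u) → ε ≤ relEntropy P Q := by
  rcases Set.eq_empty_or_nonempty {Q ∈ S | ∀ u, δ ≤ Q u} with hempty | hne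
  · exact ⟨1, one_pos, fun Q hQ hQδ => (Set.eq_empty_iff_forall_notMem.mp hempty Q ⟨hQ, hQδ⟩).elim⟩
  have hcont : ContinuousOn (relEntropy P) {Q ∈ S | ∀ u, δ ≤ Q u} :=
    continuousOn_finsetSum _ fun u _ => continuousOn_const.mul <| continuousOn_const.sub <|
      (continuous_apply u).continuousOn.log fun Q hQ => (hδ.trans_le (hQ.2 u)).ne'
  obtain ⟨Qmin, ⟨hQminS, -⟩, hmin⟩ := hK.exists_isMinOn hne hcont
  exact ⟨relEntropy P Qmin, relEntropy_pos hP (hS hQminS) (fun h => hPS (h ▸ hQminS)),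
    fun Q hQ hQδ => hmin ⟨hQ, hQδ⟩⟩

lemma exists_forall_sum_mul_log_le_sub {S : Set (X → ℝ)} {P : X → ℝ} (hS : S ⊆ openSimplex X)
    (hP : P ∈ openSimplex X) (hPS : P ∉ S)
    (hK : ∀ δ > 0, IsCompact {Q ∈ S | ∀ u, δ ≤ Q u}) :
    ∃ t > 0, ∃ η > 0, ∀ (ν : X → ℝ) (n : ℝ), (∀ u, 0 ≤ ν u) → ∑ u, ν u = n →
      (∀ u, |ν u - n * P u| ≤ n * t) →
      ∀ Q ∈ S, ∑ u, ν u * log (Q u) ≤ ∑ u, ν u * log (P u) - n * η := by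
  obtain ⟨pm, ⟨hpm, hpm1⟩, hpmP⟩ := exists_pos_le_of_mem_openSimplex hP
  have hlogpm : log pm ≤ 0 := log_nonpos hpm.le hpm1
  -- `δ` is chosen so that `Q u < δ` at a letter `u` seen at least `n pm / 2` times forces
  -- `ℓ_n(Q) ≤ n (pm / 2) log δ = n (log pm - 1) ≤ ℓ_n(P) - n`.
  set δ := exp (2 * (log pm - 1) / pm) with hδ_def
  have hδ : 0 < δ := exp_pos _
  have hδ1 : δ ≤ 1 := exp_le_one_iff.mpr (div_nonpos_of_nonpos_of_nonneg (by linarith) hpm.le)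
  have hlogδ : pm / 2 * log δ = log pm - 1 := by
    rw [hδ_def, log_exp]
    field_simp
  obtain ⟨ε, hε, hgap⟩ := exists_pos_le_relEntropy hS hP hPS hδ (hK δ hδ)
  set B := -log δ - log pm
  set t := min (pm / 2) (ε / (2 * (Fintype.card X * B + 1)))
  have hKB : 0 ≤ Fintype.card X * B :=
    mul_nonneg (Nat.cast_nonneg _) (by linarith [log_nonpos hδ.le hδ1])
  have ht : 0 < t := lt_min (by positivity) (by positivity)
  have htB : Fintype.card X * (t * B) ≤ ε / 2 := by
    have h : t * (2 * (Fintype.card X * B + 1)) ≤ ε :=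
      (le_div_iff₀ (by positivity)).mp (min_le_right _ _)
    nlinarith
  refine ⟨t, ht, min (ε / 2) 1, by positivity, fun ν n hν hνn hdev Q hQ => ?_⟩
  have hn : 0 ≤ n := hνn ▸ sum_nonneg fun u _ => hν u
  by_cases hQδ : ∀ u, δ ≤ Q u
  · have hB : ∀ u, |log (Q u) - log (P u)| ≤ B := fun u =>
      abs_log_sub_log_le hδ (hQδ u) (le_one_of_mem_openSimplex (hS hQ) u) hpm (hpmP u)
        (le_one_of_mem_openSimplex hP u)
    nlinarith [sum_mul_log_le_of_abs_le hdev hB, mul_le_mul_of_nonneg_left (hgap Q hQ hQδ) hn,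
      mul_le_mul_of_nonneg_left htB hn, mul_le_mul_of_nonneg_left (min_le_left (ε / 2) 1) hn]
  · obtain ⟨u₁, hu₁⟩ := not_forall.mp hQδ
    have hfreq : n * (pm / 2) ≤ ν u₁ := by
      nlinarith [(abs_le.mp (hdev u₁)).1, mul_le_mul_of_nonneg_left (hpmP u₁) hn,
        mul_le_mul_of_nonneg_left (min_le_left _ _ : t ≤ pm / 2) hn]
    have hsmall := sum_mul_log_le_mul_log_of_le hν (hS hQ) hfreq (not_le.mp hu₁).le hδ1
    rw [mul_assoc, hlogδ] at hsmall
    nlinarith [mul_log_le_sum_mul_log hν hνn hpm hpmP,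
      mul_le_mul_of_nonneg_left (min_le_right (ε / 2) 1) hn]

lemma nonempty_of_mem_openSimplex {P : X → ℝ} (hP : P ∈ openSimplex X) : Nonempty X := by
  by_contra h
  have := hP.2
  simp [not_nonempty_iff.mp h] at this

variable [DecidableEq X]

lemma sum_count (x : ℕ → X) (n : ℕ) : ∑ u, count x n u = n := by
  unfold count
  rw [sum_comm]
  simp

lemma sum_range_eq_sum_count_mul (x : ℕ → X) (n : ℕ) (g : X → ℝ) :
    ∑ i ∈ range n, g (x i) = ∑ u, count x n u * g u := by
  simp only [count, sum_mul, ite_mul, one_mul, zero_mul]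
  rw [sum_comm]
  simp

lemma sum_count_mul_log_le_maxLogLik {S : Set (X → ℝ)} (hS : S ⊆ openSimplex X) {Q : X → ℝ}
    (hQ : Q ∈ S) (x : ℕ → X) (n : ℕ) : ∑ u, count x n u * log (Q u) ≤ maxLogLik S x n := by
  rw [← sum_range_eq_sum_count_mul]
  refine le_csSup ⟨0, ?_⟩ ⟨Q, hQ, rfl⟩
  rintro y ⟨Q', hQ', rfl⟩
  exact sum_nonpos fun i _ => log_nonpos_of_mem_openSimplex (hS hQ') _

lemma maxLogLik_le {S : Set (X → ℝ)} (hne : S.Nonempty) {x : ℕ → X} {n : ℕ} {b : ℝ}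
    (h : ∀ Q ∈ S, ∑ u, count x n u * log (Q u) ≤ b) : maxLogLik S x n ≤ b := by
  obtain ⟨Q₀, hQ₀⟩ := hne
  refine csSup_le ⟨_, Q₀, hQ₀, rfl⟩ ?_
  rintro y ⟨Q, hQ, rfl⟩
  rw [sum_range_eq_sum_count_mul x n (fun u => log (Q u))]
  exact h Q hQ

-- Deviations of order `√(n r)` with `r → ∞` are what Chebyshev's inequality rules out.
def BicLeForcesDeviation (S₀ S : Set (X → ℝ)) (d₀ d : ℕ) (P : X → ℝ) : Prop :=
  ∃ r : X → ℕ → ℝ, (∀ u, Tendsto (r u) atTop atTop) ∧ ∀ᶠ n : ℕ in atTop, ∀ x : ℕ → X,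
    bic S₀ d₀ x n ≤ bic S d x n → ∃ u, n * r u n ≤ (count x n u - n * P u) ^ 2

lemma log_le_two_mul_chiSq_of_bic_le {S₀ S : Set (X → ℝ)} {P : X → ℝ} {d₀ d : ℕ}
    (hS₀ : S₀ ⊆ openSimplex X) (hP : P ∈ S₀) (hS : S ⊆ openSimplex X) (hne : S.Nonempty)
    (hd : d₀ < d) {x : ℕ → X} {n : ℕ} (hn : 0 < n) (h : bic S₀ d₀ x n ≤ bic S d x n) :
    log n ≤ 2 * ∑ u, (count x n u - n * P u) ^ 2 / (n * P u) := by
  have hmax : maxLogLik S x n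
      ≤ ∑ u, count x n u * log (P u) + ∑ u, (count x n u - n * P u) ^ 2 / (n * P u) :=
    maxLogLik_le hne fun Q hQ =>
      sum_mul_log_le_add_chiSq (count_nonneg x n) (Nat.cast_pos.mpr hn) (hS hQ) (hS₀ hP)
  have hmax₀ := sum_count_mul_log_le_maxLogLik hS₀ hP x n
  have hd' : (d₀ : ℝ) + 1 ≤ d := by exact_mod_cast hd
  have hlog : 0 ≤ log n := log_natCast_nonneg n
  unfold bic at h
  nlinarith

lemma exists_sq_count_sub_ge_of_bic_le {S₀ S : Set (X → ℝ)} {P : X → ℝ} {d₀ d : ℕ}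
    (hS₀ : S₀ ⊆ openSimplex X) (hP : P ∈ S₀) (hS : S ⊆ openSimplex X) (hne : S.Nonempty)
    (hd : d₀ < d) {x : ℕ → X} {n : ℕ} (hn : 0 < n) (h : bic S₀ d₀ x n ≤ bic S d x n) :
    ∃ u, n * (P u * log n / (2 * Fintype.card X)) ≤ (count x n u - n * P u) ^ 2 := by
  have := nonempty_of_mem_openSimplex (hS₀ hP)
  have hK : (0 : ℝ) < Fintype.card X := Nat.cast_pos.mpr Fintype.card_pos
  have hconst : ∑ _u : X, log n / (2 * Fintype.card X) = log n / 2 := by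
    rw [sum_const, card_univ, nsmul_eq_mul]
    field_simp
  have hsum : ∑ _u : X, log n / (2 * Fintype.card X)
      ≤ ∑ u, (count x n u - n * P u) ^ 2 / (n * P u) := by
    linarith [log_le_two_mul_chiSq_of_bic_le hS₀ hP hS hne hd hn h]
  obtain ⟨u, -, hu⟩ := exists_le_of_sum_le univ_nonempty hsum
  refine ⟨u, ?_⟩
  have hnP : 0 < n * P u := mul_pos (Nat.cast_pos.mpr hn) ((hS₀ hP).1 u)
  calc n * (P u * log n / (2 * Fintype.card X))
      = log n / (2 * Fintype.card X) * (n * P u) := by ring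
    _ ≤ (count x n u - n * P u) ^ 2 := (le_div_iff₀ hnP).mp hu

lemma bicLeForcesDeviation_of_lt {S₀ S : Set (X → ℝ)} {P : X → ℝ} {d₀ d : ℕ}
    (hS₀ : S₀ ⊆ openSimplex X) (hP : P ∈ S₀) (hS : S ⊆ openSimplex X) (hne : S.Nonempty)
    (hd : d₀ < d) : BicLeForcesDeviation S₀ S d₀ d P := by
  refine ⟨fun u n => P u * log n / (2 * Fintype.card X), fun u => ?_,
    (eventually_gt_atTop 0).mono fun n hn x h =>
      exists_sq_count_sub_ge_of_bic_le hS₀ hP hS hne hd hn h⟩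
  have := nonempty_of_mem_openSimplex (hS₀ hP)
  exact ((tendsto_log_atTop.comp tendsto_natCast_atTop_atTop).const_mul_atTop
    ((hS₀ hP).1 u)).atTop_div_const (by positivity)

lemma eventually_mul_log_lt_mul (a : ℝ) {b : ℝ} (hb : 0 < b) :
    ∀ᶠ n : ℕ in atTop, a * log n < b * n := by
  have h := (isLittleO_log_id_atTop.const_mul_left a).def (half_pos hb)
  filter_upwards [tendsto_natCast_atTop_atTop.eventually h, eventually_gt_atTop 0] with n hn hpos
  have hn₀ : (0 : ℝ) < n := Nat.cast_pos.mpr hpos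
  rw [Real.norm_eq_abs, Real.norm_eq_abs, id, abs_of_pos hn₀] at hn
  linarith [le_abs_self (a * log n), mul_pos hb hn₀]

lemma bicLeForcesDeviation_of_notMem {S₀ S : Set (X → ℝ)} {P : X → ℝ}
    (hS₀ : S₀ ⊆ openSimplex X) (hP : P ∈ S₀) (hS : S ⊆ openSimplex X) (hne : S.Nonempty)
    (hK : ∀ δ > 0, IsCompact {Q ∈ S | ∀ u, δ ≤ Q u}) (hPS : P ∉ S) (d₀ d : ℕ) :
    BicLeForcesDeviation S₀ S d₀ d P := by
  obtain ⟨t, ht, η, hη, hsep⟩ := exists_forall_sum_mul_log_le_sub hS (hS₀ hP) hPS hK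
  refine ⟨fun _ n => n * t ^ 2,
    fun _ => tendsto_natCast_atTop_atTop.atTop_mul_const (by positivity), ?_⟩
  filter_upwards [eventually_mul_log_lt_mul d₀ (by positivity : 0 < 2 * η)] with n hlog x h
  by_contra hnear
  have hdev : ∀ u, |count x n u - n * P u| ≤ n * t := fun u => by
    refine (abs_lt_of_sq_lt_sq ?_ (by positivity)).le
    have := not_le.mp (not_exists.mp hnear u)
    linarith
  have hmax : maxLogLik S x n ≤ ∑ u, count x n u * log (P u) - n * η :=
    maxLogLik_le hne fun Q hQ => hsep _ _ (count_nonneg x n) (sum_count x n) hdev Q hQ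
  have hmax₀ := sum_count_mul_log_le_maxLogLik hS₀ hP x n
  have hd : 0 ≤ d * log n := mul_nonneg (Nat.cast_nonneg d) (log_natCast_nonneg n)
  unfold bic at h
  linarith

section Probability

variable [MeasurableSpace X] [MeasurableSingletonClass X]
  {Ω : Type*} [MeasurableSpace Ω] {μ : Measure Ω} [IsProbabilityMeasure μ] {Xs : ℕ → Ω → X}

lemma tendsto_measure_exists_sq_count_sub_ge (hmeas : ∀ i, Measurable (Xs i))
    (hindep : iIndepFun Xs μ) {P : X → ℝ} (hP : ∀ u, 0 ≤ P u)
    (hdist : ∀ i u, μ {ω | Xs i ω = u} = ENNReal.ofReal (P u)) {r : X → ℕ → ℝ}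
    (hr : ∀ u, Tendsto (r u) atTop atTop) :
    Tendsto (fun n : ℕ => μ {ω | ∃ u, n * r u n ≤ (count (Xs · ω) n u - n * P u) ^ 2})
      atTop (𝓝 0) := by
  have hbound : ∀ u, ∀ᶠ n : ℕ in atTop,
      μ {ω | n * r u n ≤ (count (Xs · ω) n u - n * P u) ^ 2} ≤ ENNReal.ofReal (4 * r u n)⁻¹ := by
    intro u
    filter_upwards [(hr u).eventually_gt_atTop 0, eventually_gt_atTop 0] with n hr hn
    have hnr : (0 : ℝ) < n * r u n := mul_pos (Nat.cast_pos.mpr hn) hr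
    calc μ {ω | n * r u n ≤ (count (Xs · ω) n u - n * P u) ^ 2}
        ≤ μ {ω | √(n * r u n) ≤ |count (Xs · ω) n u - n * P u|} :=
          measure_mono fun ω hω => (Real.sqrt_le_sqrt hω).trans_eq (Real.sqrt_sq_eq_abs _)
      _ ≤ ENNReal.ofReal (n / (4 * √(n * r u n) ^ 2)) :=
          measure_le_abs_count_sub_le hmeas hindep (hP u) (fun i => hdist i u) n
            (Real.sqrt_pos.mpr hnr)
      _ = ENNReal.ofReal (4 * r u n)⁻¹ := by
          rw [Real.sq_sqrt hnr.le]
          congr 1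
          field_simp
  have hlim : ∀ u, Tendsto (fun n : ℕ => ENNReal.ofReal (4 * r u n)⁻¹) atTop (𝓝 0) := fun u => by
    simpa using ENNReal.tendsto_ofReal ((hr u).const_mul_atTop four_pos).inv_tendsto_atTop
  have hsum := tendsto_finsetSum univ fun u _ => hlim u
  rw [sum_const_zero] at hsum
  refine tendsto_of_tendsto_of_tendsto_of_le_of_le' tendsto_const_nhds hsum
    (Eventually.of_forall fun n => zero_le) ?_
  filter_upwards [eventually_all.mpr hbound] with n hn
  rw [Set.ofPred_exists]
  exact (measure_iUnion_fintype_le μ _).trans (sum_le_sum fun u _ => hn u)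

lemma BicLeForcesDeviation.tendsto_measure {S₀ S : Set (X → ℝ)} {d₀ d : ℕ} {P : X → ℝ}
    (h : BicLeForcesDeviation S₀ S d₀ d P) (hmeas : ∀ i, Measurable (Xs i))
    (hindep : iIndepFun Xs μ) (hP : ∀ u, 0 ≤ P u)
    (hdist : ∀ i u, μ {ω | Xs i ω = u} = ENNReal.ofReal (P u)) :
    Tendsto (fun n => μ {ω | bic S₀ d₀ (Xs · ω) n ≤ bic S d (Xs · ω) n}) atTop (𝓝 0) := by
  obtain ⟨r, hr, hev⟩ := h
  refine tendsto_of_tendsto_of_tendsto_of_le_of_le' tendsto_const_nhds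
    (tendsto_measure_exists_sq_count_sub_ge hmeas hindep hP hdist hr)
    (Eventually.of_forall fun n => zero_le) ?_
  filter_upwards [hev] with n hn
  exact measure_mono fun ω hω => hn _ hω

end Probability

end ModelSelection

open ModelSelection

theorem bic_consistency_general {X : Type*} [Fintype X]
    [MeasurableSpace X] [MeasurableSingletonClass X]
    {Ω : Type*} [MeasurableSpace Ω] (μ : Measure Ω) [IsProbabilityMeasure μ]
    (Xs : ℕ → Ω → X) (hmeas : ∀ i, Measurable (Xs i))
    (hindep : iIndepFun Xs μ)
    (P₀ : X → ℝ)
    (hdist : ∀ i u, μ {ω | Xs i ω = u} = ENNReal.ofReal (P₀ u))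
    {M : Type*} [Fintype M] (Mod : M → Set (X → ℝ)) (dm : M → ℕ) (m₀ : M)
    (hdistr : ∀ m, ∀ Q ∈ Mod m, (∀ u, 0 < Q u) ∧ ∑ u, Q u = 1)
    (hparam : ∀ m, ∃ (dp : ℕ) (Θp : Set (Fin dp → ℝ)) (φ : (Fin dp → ℝ) → X → ℝ),
      (∀ u, ContinuousOn (fun θ => φ θ u) Θp) ∧
      (∀ δ : ℝ, 0 < δ → IsCompact {θ ∈ Θp | ∀ u, δ ≤ φ θ u}) ∧
      Mod m = φ '' Θp)
    (hlb : ∀ m, ∃ Q ∈ Mod m, ∃ c > (0 : ℝ), ∀ u, c ≤ Q u)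
    (hP₀mem : P₀ ∈ Mod m₀)
    (hdim : ∀ m, m ≠ m₀ → P₀ ∈ Mod m → dm m₀ < dm m)
    (mhat : ℕ → Ω → M)
    (hmhat : ∀ (n : ℕ) (ω : Ω) (m : M),
      2 * sSup {y : ℝ | ∃ Q ∈ Mod m, y = ∑ i ∈ Finset.range n, Real.log (Q (Xs i ω))}
          - (dm m : ℝ) * Real.log n ≤
      2 * sSup {y : ℝ | ∃ Q ∈ Mod (mhat n ω),
            y = ∑ i ∈ Finset.range n, Real.log (Q (Xs i ω))}
          - (dm (mhat n ω) : ℝ) * Real.log n) :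
    Tendsto (fun (n : ℕ) => μ {ω | mhat n ω = m₀}) atTop (nhds 1) := by
  classical
  have hS : ∀ m, Mod m ⊆ openSimplex X := hdistr
  have hne : ∀ m, (Mod m).Nonempty := fun m =>
    let ⟨Q, hQ, _⟩ := hlb m
    ⟨Q, hQ⟩
  have hK : ∀ m, ∀ δ > 0, IsCompact {Q ∈ Mod m | ∀ u, δ ≤ Q u} := fun m δ hδ => by
    obtain ⟨dp, Θ, φ, hφ, hΘ, hMod⟩ := hparam m
    rw [hMod]
    exact isCompact_image_sep_forall_le hφ (hΘ δ hδ)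
  refine tendsto_measure_argmax_eq (fun m n ω => bic (Mod m) (dm m) (Xs · ω) n) mhat hmhat m₀
    fun m hm => ?_
  have hforce : BicLeForcesDeviation (Mod m₀) (Mod m) (dm m₀) (dm m) P₀ := by
    by_cases hmem : P₀ ∈ Mod m
    · exact bicLeForcesDeviation_of_lt (hS m₀) hP₀mem (hS m) (hne m) (hdim m hm hmem)
    · exact bicLeForcesDeviation_of_notMem (hS m₀) hP₀mem (hS m) (hne m) (hK m) hmem _ _
  exact hforce.tendsto_measure hmeas hindep (fun u => ((hS m₀ hP₀mem).1 u).le) hdist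

/-- consistency of BIC model selection over a finite collection of
models of positive distributions on a finite set `X`, each parameterized
continuously by a compact-exhaustible parameter set, with dimensions such that any
other model containing `P₀` has strictly larger dimension: the BIC-maximizing model
`m̂_n` equals the true model `m₀` with probability tending to `1`. -/
theorem bic_consistency {X : Type*} [Fintype X] [Nonempty X]
    [MeasurableSpace X] [MeasurableSingletonClass X]
    {Ω : Type*} [MeasurableSpace Ω] (μ : Measure Ω) [IsProbabilityMeasure μ]
    (Xs : ℕ → Ω → X) (hmeas : ∀ i, Measurable (Xs i))
    (hindep : iIndepFun Xs μ)
    (P₀ : X → ℝ) (hpos : ∀ u, 0 < P₀ u) (hsum : ∑ u, P₀ u = 1)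
    (hdist : ∀ i u, μ {ω | Xs i ω = u} = ENNReal.ofReal (P₀ u))
    {M : Type*} [Fintype M] (Mod : M → Set (X → ℝ)) (dm : M → ℕ) (m₀ : M)
    (hdistr : ∀ m, ∀ Q ∈ Mod m, (∀ u, 0 < Q u) ∧ ∑ u, Q u = 1)
    (hparam : ∀ m, ∃ (dp : ℕ) (Θp : Set (Fin dp → ℝ)) (φ : (Fin dp → ℝ) → X → ℝ),
      (∀ u, ContinuousOn (fun θ => φ θ u) Θp) ∧
      (∀ δ : ℝ, 0 < δ → IsCompact {θ ∈ Θp | ∀ u, δ ≤ φ θ u}) ∧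
      Mod m = φ '' Θp)
    (hlb : ∀ m, ∃ Q ∈ Mod m, ∃ c > (0 : ℝ), ∀ u, c ≤ Q u)
    (hP₀mem : P₀ ∈ Mod m₀)
    (hdim : ∀ m, m ≠ m₀ → P₀ ∈ Mod m → dm m₀ < dm m)
    (mhat : ℕ → Ω → M)
    (hmhat : ∀ (n : ℕ) (ω : Ω) (m : M),
      2 * sSup {y : ℝ | ∃ Q ∈ Mod m, y = ∑ i ∈ Finset.range n, Real.log (Q (Xs i ω))}
          - (dm m : ℝ) * Real.log n ≤
      2 * sSup {y : ℝ | ∃ Q ∈ Mod (mhat n ω),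
            y = ∑ i ∈ Finset.range n, Real.log (Q (Xs i ω))}
          - (dm (mhat n ω) : ℝ) * Real.log n) :
    Tendsto (fun (n : ℕ) => μ {ω | mhat n ω = m₀}) atTop (nhds 1) :=
  bic_consistency_general μ Xs hmeas hindep P₀ hdist Mod dm m₀ hdistr hparam hlb hP₀mem hdim mhat
    hmhat
end
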